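/- arXiv:1001.0058 — 3 statements merged into one kernel-verified Lean document; each statement's English description precedes it below -/
import Mathlib

section
/- Let L(s) and C(s) be formal power series with constant term 1 over a commutative ring, related for each nonnegative integer k by the coefficient identity coming from C(s) = exp(∑_{k≥1} −(q^k−1)^{−n} S(k) s^k / k) and L(s) = exp(∑_{k≥1} S(k) s^k / k). Then L(s) = ∏_{i=0}^{n} C(q^i s)^{(−1)^{n−i+1} binom(n,i)}, i.e., expanding (q^k−1)^n = ∑_{i=0}^n binom(n,i) (−1)^{n−i} q^{ik} yields this product formula of formal power series. -/
open PowerSeries Finset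

/-! The Euler logarithmic derivative `u ↦ X u' / u` is a homomorphism from the units of `R⟦X⟧`
to the additive group `R⟦X⟧`, it commutes with `rescale c : f(s) ↦ f(c s)`, and over a
`ℚ`-algebra it determines a unit up to its constant term. The recurrences say that `L` and `C`
have Euler logarithmic derivatives `∑ S(k) s^k` and `∑ -(q^k - 1)^{-n} S(k) s^k`, so the product
has Euler logarithmic derivative
`∑_k (∑_i (-1)^{n-i+1} binom(n,i) q^{ik}) (-(q^k - 1)^{-n}) S(k) s^k`,
and the inner sum is `-(q^k - 1)^n` by the binomial theorem. -/

namespace PowerSeries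

variable {R : Type*} [CommRing R]

noncomputable def mkPos (a : ℕ → R) : R⟦X⟧ :=
  mk fun m => if m = 0 then 0 else a m

@[simp]
theorem coeff_mkPos (a : ℕ → R) (m : ℕ) : coeff m (mkPos a) = if m = 0 then 0 else a m :=
  coeff_mk _ _

theorem coeff_mkPos_mul (a : ℕ → R) (f : R⟦X⟧) (k : ℕ) :
    coeff k (mkPos a * f) = ∑ m ∈ Icc 1 k, a m * coeff (k - m) f := by
  rw [coeff_mul, Nat.sum_antidiagonal_eq_sum_range_succ_mk, sum_range_succ',
    ← Ico_add_one_right_eq_Icc, sum_Ico_eq_sum_range]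
  simp [add_comm 1]

theorem X_mul_derivative_eq_mkPos_mul {a : ℕ → R} {f : R⟦X⟧}
    (h : ∀ k : ℕ, 1 ≤ k → (k : R) * coeff k f = ∑ m ∈ Icc 1 k, a m * coeff (k - m) f) :
    X * d⁄dX R f = mkPos a * f := by
  ext (_ | k)
  · simp [coeff_mkPos_mul]
  · rw [coeff_succ_X_mul, coeff_derivative, coeff_mkPos_mul, ← h (k + 1) k.succ_pos]
    push_cast
    ring

theorem constantCoeff_rescale (c : R) (f : R⟦X⟧) :
    constantCoeff (rescale c f) = constantCoeff f := by
  rw [← coeff_zero_eq_constantCoeff_apply, coeff_rescale, pow_zero, one_mul,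
    coeff_zero_eq_constantCoeff_apply]

theorem X_mul_derivative_rescale (c : R) (f : R⟦X⟧) :
    X * d⁄dX R (rescale c f) = rescale c (X * d⁄dX R f) := by
  ext (_ | k)
  · simp
  · simp only [coeff_succ_X_mul, coeff_derivative, coeff_rescale]
    ring

noncomputable def xLogDeriv : (R⟦X⟧)ˣ →* Multiplicative R⟦X⟧ where
  toFun u := .ofAdd (X * d⁄dX R u * (↑u⁻¹ : R⟦X⟧))
  map_one' := by simp
  map_mul' u w := by
    simp only [Units.val_mul, mul_inv_rev, Derivation.leibniz, smul_eq_mul, ← ofAdd_add]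
    congr 1
    linear_combination (X * d⁄dX R ↑w * (↑w⁻¹ : R⟦X⟧)) * u.mul_inv +
      (X * d⁄dX R ↑u * (↑u⁻¹ : R⟦X⟧)) * w.mul_inv

theorem xLogDeriv_eq_ofAdd {u : (R⟦X⟧)ˣ} {g : R⟦X⟧} (h : X * d⁄dX R u = g * (u : R⟦X⟧)) :
    xLogDeriv u = .ofAdd g := by
  change Multiplicative.ofAdd (X * d⁄dX R u * (↑u⁻¹ : R⟦X⟧)) = _
  rw [h, mul_assoc, u.mul_inv, mul_one]

theorem xLogDeriv_map_rescale (c : R) (u : (R⟦X⟧)ˣ) :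
    xLogDeriv (Units.map (rescale c).toMonoidHom u) = .ofAdd (rescale c (xLogDeriv u).toAdd) := by
  change Multiplicative.ofAdd (X * d⁄dX R (rescale c u) * rescale c (↑u⁻¹ : R⟦X⟧)) = _
  rw [X_mul_derivative_rescale, ← map_mul]
  rfl

theorem eq_of_xLogDeriv_eq [IsAddTorsionFree R] {u w : (R⟦X⟧)ˣ}
    (h0 : constantCoeff (u : R⟦X⟧) = constantCoeff (w : R⟦X⟧)) (h : xLogDeriv u = xLogDeriv w) :
    u = w := by
  set t := u * w⁻¹
  have hquot : X * d⁄dX R t * (↑t⁻¹ : R⟦X⟧) = 0 :=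
    congrArg Multiplicative.toAdd
      (show xLogDeriv t = 1 by rw [map_mul, map_inv, h, mul_inv_cancel])
  have hderiv : d⁄dX R t = d⁄dX R 1 := by
    refine X_mul_cancel ?_
    rw [derivative_one, mul_zero, ← mul_one (X * _), ← t.inv_mul, ← mul_assoc, hquot, zero_mul]
  have hconst : constantCoeff (t : R⟦X⟧) = constantCoeff 1 := by
    rw [Units.val_mul, map_mul, h0, ← map_mul, w.mul_inv]
  exact mul_inv_eq_one.mp (Units.ext (derivative.ext hderiv hconst))

theorem sum_zsmul_neg_one_pow_choose_mul_pow (x : R) (n : ℕ) :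
    ∑ i ∈ range (n + 1), ((-1 : ℤ) ^ (n - i + 1) * n.choose i) • x ^ i = -(x - 1) ^ n := by
  rw [sub_pow, ← sum_neg_distrib]
  refine sum_congr rfl fun i hi => ?_
  have hparity : (-1 : R) ^ (i + n) = (-1) ^ (n - i) := by
    rw [show i + n = n - i + 2 * i by grind, pow_add, pow_mul]
    simp
  simp only [zsmul_eq_mul, Int.cast_mul, Int.cast_pow, Int.cast_neg, Int.cast_one,
    Int.cast_natCast, one_pow, hparity, pow_succ]
  ring

theorem sum_zsmul_rescale_mkPos (q : R) (n : ℕ) (v S : ℕ → R)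
    (hv : ∀ k : ℕ, 1 ≤ k → v k * (q ^ k - 1) = 1) :
    ∑ i ∈ range (n + 1), ((-1 : ℤ) ^ (n - i + 1) * n.choose i) •
      rescale (q ^ i) (mkPos fun m => -v m ^ n * S m) = mkPos S := by
  ext m
  simp only [map_sum, map_zsmul, coeff_rescale, coeff_mkPos]
  split_ifs with hm
  · simp
  calc ∑ i ∈ range (n + 1),
        ((-1 : ℤ) ^ (n - i + 1) * n.choose i) • ((q ^ i) ^ m * (-v m ^ n * S m))
      = (∑ i ∈ range (n + 1), ((-1 : ℤ) ^ (n - i + 1) * n.choose i) • (q ^ m) ^ i) *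
          (-v m ^ n * S m) := by
        simp only [sum_mul, smul_mul_assoc, pow_right_comm]
    _ = (v m * (q ^ m - 1)) ^ n * S m := by
        rw [sum_zsmul_neg_one_pow_choose_mul_pow, mul_pow]
        ring
    _ = S m := by rw [hv m (Nat.one_le_iff_ne_zero.mpr hm), one_pow, one_mul]

end PowerSeries

theorem L_eq_prod_C_general {R : Type*} [CommRing R] [Algebra ℚ R]
    (q : R) (n : ℕ) (S : ℕ → R) (v : ℕ → R)
    (hv : ∀ k : ℕ, 1 ≤ k → v k * (q ^ k - 1) = 1)
    (L C : PowerSeries R)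
    (hL0 : constantCoeff L = 1) (hC0 : constantCoeff C = 1)
    (hL : ∀ k : ℕ, 1 ≤ k →
      (k : R) * coeff k L = ∑ m ∈ Icc 1 k, S m * coeff (k - m) L)
    (hC : ∀ k : ℕ, 1 ≤ k →
      (k : R) * coeff k C = ∑ m ∈ Icc 1 k, (-(v m) ^ n * S m) * coeff (k - m) C)
    (uC : (PowerSeries R)ˣ) (huC : (uC : PowerSeries R) = C) :
    L = ↑(∏ i ∈ range (n + 1),
        (Units.map (rescale (q ^ i)).toMonoidHom uC) ^
          ((-1 : ℤ) ^ (n - i + 1) * (n.choose i : ℤ))) := by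
  have : IsAddTorsionFree R := .of_module_rat R
  obtain ⟨uL, rfl⟩ : IsUnit L := isUnit_iff_constantCoeff.mpr (hL0 ▸ isUnit_one)
  subst huC
  have hCd : xLogDeriv uC = .ofAdd (mkPos fun m => -v m ^ n * S m) :=
    xLogDeriv_eq_ofAdd (X_mul_derivative_eq_mkPos_mul hC)
  have hrescale0 (c : R) :
      Units.map constantCoeff.toMonoidHom (Units.map (rescale c).toMonoidHom uC) = 1 :=
    Units.ext ((constantCoeff_rescale c _).trans hC0)
  refine congrArg Units.val (eq_of_xLogDeriv_eq (hL0.trans ?_) ?_)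
  · change 1 = ((Units.map constantCoeff.toMonoidHom _ : Rˣ) : R)
    rw [map_prod, prod_eq_one fun i _ => by rw [map_zpow, hrescale0, one_zpow], Units.val_one]
  · rw [xLogDeriv_eq_ofAdd (X_mul_derivative_eq_mkPos_mul hL),
      ← sum_zsmul_rescale_mkPos q n v S hv, ofAdd_sum, map_prod]
    refine prod_congr rfl fun i _ => ?_
    rw [map_zpow, xLogDeriv_map_rescale, hCd, toAdd_ofAdd, ofAdd_zsmul]

/-- Let `R` be a commutative ℚ-algebra, `q ∈ R`, `n ≥ 1`, and `S : ℕ → R` a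
sequence with each `q^k - 1` invertible (with inverse `v k`).  Let
`L = exp(∑_{k≥1} S k s^k / k)` and `C = exp(∑_{k≥1} -(q^k-1)^{-n} S k s^k / k)`,
encoded by the coefficient recurrences obtained by logarithmic differentiation.
Then `L(s) = ∏_{i=0}^{n} C(q^i s)^{(-1)^{n-i+1} binom(n,i)}`. -/
theorem L_eq_prod_C {R : Type*} [CommRing R] [Algebra ℚ R]
    (q : R) (n : ℕ) (hn : 1 ≤ n) (S : ℕ → R) (v : ℕ → R)
    (hv : ∀ k : ℕ, 1 ≤ k → v k * (q ^ k - 1) = 1)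
    (L C : PowerSeries R)
    (hL0 : constantCoeff L = 1) (hC0 : constantCoeff C = 1)
    (hL : ∀ k : ℕ, 1 ≤ k →
      (k : R) * coeff k L = ∑ m ∈ Icc 1 k, S m * coeff (k - m) L)
    (hC : ∀ k : ℕ, 1 ≤ k →
      (k : R) * coeff k C = ∑ m ∈ Icc 1 k, (-(v m) ^ n * S m) * coeff (k - m) C)
    (uC : (PowerSeries R)ˣ) (huC : (uC : PowerSeries R) = C) :
    L = ↑(∏ i ∈ range (n + 1),
        (Units.map (rescale (q ^ i)).toMonoidHom uC) ^
          ((-1 : ℤ) ^ (n - i + 1) * (n.choose i : ℤ))) :=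
  L_eq_prod_C_general q n S v hv L C hL0 hC0 hL hC uC huC
end

section
/- With L and C as in the previous context and assuming in addition that the infinite product converges coefficientwise (q topologically nilpotent), C(s) = ∏_{j=0}^{∞} L(q^j s)^{(−1)^{n−1} binom(n+j−1, j)}, i.e., the identity (q^k − 1)^{−n} = (−1)^n ∑_{j≥0} binom(n+j−1,j) q^{jk} of formal expansions yields this infinite product formula. -/
/-!
Write `e_j = (-1)^(n-1) binom(n+j-1, j)` and `P_N = ∏_{j<N} L(q^j s)^(e_j)`. A power series with
constant term `1` is determined by its Euler logarithmic derivative `s F'/F`, which turns products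
into sums. For `P_N` it is `∑_k (∑_{j<N} e_j q^(jk)) S k s^k`, and the inner sum is a truncation of
the expansion of `-(q^k - 1)^(-n)`, so it agrees with the `k`-th coefficient for `C` modulo
`q^(kN) ∈ I^N`. Solving `k F_k = ∑_m T_m F_(k-m)` coefficient by coefficient, dividing by `k` in the
`ℚ`-algebra `R`, carries this congruence over to all coefficients of `P_N - C`.
-/

open PowerSeries Finset

namespace PowerSeries

variable {R : Type*} [CommRing R]

/-- `T = X F' / F`, without dividing by `F`. The series `exp (∑_{m ≥ 1} a m X^m / m)` is the one
with constant term `1` and `T = ∑_{m ≥ 1} a m X^m`, which is how `L` and `C` are specified. -/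
def HasLogDeriv (T F : R⟦X⟧) : Prop := X * d⁄dX R F = T * F

theorem hasLogDeriv_iff_coeff {T F : R⟦X⟧} :
    HasLogDeriv T F ↔ ∀ k : ℕ, (k : R) * coeff k F = coeff k (T * F) := by
  have h (k : ℕ) : coeff k (X * d⁄dX R F) = (k : R) * coeff k F := by
    cases k with
    | zero => simp
    | succ k => rw [coeff_succ_X_mul, coeff_derivative]; push_cast; ring
  simp only [HasLogDeriv, PowerSeries.ext_iff, h]

namespace HasLogDeriv

theorem one : HasLogDeriv (0 : R⟦X⟧) 1 := by
  simp [HasLogDeriv]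

theorem mul {T U F G : R⟦X⟧} (hF : HasLogDeriv T F) (hG : HasLogDeriv U G) :
    HasLogDeriv (T + U) (F * G) := by
  unfold HasLogDeriv at *
  rw [Derivation.leibniz, smul_eq_mul, smul_eq_mul]
  linear_combination F * hG + G * hF

theorem inv {T : R⟦X⟧} {w : R⟦X⟧ˣ} (h : HasLogDeriv T w) : HasLogDeriv (-T) ↑w⁻¹ := by
  unfold HasLogDeriv at *
  rw [derivative_inv]
  linear_combination (-(↑w⁻¹ : R⟦X⟧) ^ 2) * h - T * ↑w⁻¹ * w.inv_mul

theorem zpow {T : R⟦X⟧} {w : R⟦X⟧ˣ} (h : HasLogDeriv T w) (z : ℤ) :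
    HasLogDeriv (z • T) ↑(w ^ z) := by
  induction z using Int.induction_on with
  | zero => simpa using one
  | succ i ih =>
    rw [zpow_add_one, Units.val_mul, add_smul, one_smul]
    exact ih.mul h
  | pred i ih =>
    rw [zpow_sub_one, Units.val_mul, sub_smul, one_smul, sub_eq_add_neg]
    exact ih.mul h.inv

theorem prod {ι : Type*} {s : Finset ι} {T F : ι → R⟦X⟧}
    (h : ∀ j ∈ s, HasLogDeriv (T j) (F j)) : HasLogDeriv (∑ j ∈ s, T j) (∏ j ∈ s, F j) := by
  classical
  induction s using Finset.induction_on with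
  | empty => simpa using one
  | insert a s ha ih =>
    rw [sum_insert ha, prod_insert ha]
    exact (h a (mem_insert_self a s)).mul (ih fun j hj => h j (mem_insert_of_mem hj))

theorem rescale {T F : R⟦X⟧} (h : HasLogDeriv T F) (c : R) :
    HasLogDeriv (rescale c T) (rescale c F) := by
  rw [hasLogDeriv_iff_coeff] at h ⊢
  intro k
  rw [← map_mul, coeff_rescale, coeff_rescale, ← h k]
  ring

theorem mk_of_recurrence {a : ℕ → R} {F : R⟦X⟧}
    (h : ∀ k : ℕ, 1 ≤ k → (k : R) * coeff k F = ∑ m ∈ Icc 1 k, a m * coeff (k - m) F) :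
    HasLogDeriv (mk fun m => if m = 0 then 0 else a m) F := by
  rw [hasLogDeriv_iff_coeff]
  intro k
  rcases k.eq_zero_or_pos with rfl | hk
  · simp
  rw [h k hk, coeff_mul, Nat.sum_antidiagonal_eq_sum_range_succ_mk, range_eq_Ico,
    sum_eq_sum_Ico_succ_bot k.succ_pos, zero_add, Nat.succ_eq_add_one, Ico_add_one_right_eq_Icc]
  simp only [coeff_mk, if_true, zero_mul, zero_add]
  refine sum_congr rfl fun m hm => ?_
  rw [if_neg (by have := (mem_Icc.mp hm).1; omega)]

end HasLogDeriv

theorem coeff_sub_mem_of_hasLogDeriv [Algebra ℚ R] {J : Ideal R} {T U F G : R⟦X⟧}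
    (hF : HasLogDeriv T F) (hG : HasLogDeriv U G) (hT : constantCoeff T = 0)
    (h0 : constantCoeff F = constantCoeff G) (hTU : ∀ m, coeff m T - coeff m U ∈ J) (k : ℕ) :
    coeff k (F - G) ∈ J := by
  induction k using Nat.strong_induction_on with
  | _ k ih =>
  rcases k.eq_zero_or_pos with rfl | hk
  · simp [h0]
  have hrec : (k : R) * coeff k (F - G) = coeff k (T * (F - G)) + coeff k ((T - U) * G) := by
    rw [map_sub, mul_sub, hasLogDeriv_iff_coeff.mp hF, hasLogDeriv_iff_coeff.mp hG, ← map_sub,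
      ← map_add]
    congr 1
    ring
  -- `T` has no constant term, so only lower coefficients of `F - G` enter.
  have hmem : (k : R) * coeff k (F - G) ∈ J := by
    rw [hrec, coeff_mul, coeff_mul]
    refine add_mem (sum_mem fun p hp => ?_) (sum_mem fun p _ => J.mul_mem_right _ ?_)
    · rcases p.1.eq_zero_or_pos with h | h
      · simp [h, hT]
      · exact J.mul_mem_left _ (ih _ (by have := mem_antidiagonal.mp hp; omega))
    · simpa using hTU p.1
  have hk' : (k : ℚ) ≠ 0 := by exact_mod_cast hk.ne'
  have hdiv : coeff k (F - G) = algebraMap ℚ R (k : ℚ)⁻¹ * ((k : R) * coeff k (F - G)) := by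
    rw [← mul_assoc, ← map_natCast (algebraMap ℚ R), ← map_mul, inv_mul_cancel₀ hk', map_one,
      one_mul]
  rw [hdiv]
  exact J.mul_mem_left _ hmem

theorem pow_dvd_one_sub_pow_mul_sum_choose_sub_one {n : ℕ} (hn : 0 < n) (N : ℕ) (x : R) :
    x ^ N ∣ (1 - x) ^ n * ∑ j ∈ range N, ((n + j - 1).choose j : R) * x ^ j - 1 := by
  set g := (invOneSubPow R n).val
  have hg : (1 - X : R⟦X⟧) ^ n * g = 1 := by
    rw [← invOneSubPow_inv_eq_one_sub_pow]
    exact (invOneSubPow R n).inv_val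
  have hcoeff (j : ℕ) : coeff j g = ((n + j - 1).choose j : R) := by
    rw [show g = _ from invOneSubPow_val_eq_mk_sub_one_add_choose_of_pos _ _ hn, coeff_mk,
      Nat.choose_symm_add, show n - 1 + j = n + j - 1 by omega]
  have hdvd : (Polynomial.X : Polynomial R) ^ N ∣ (1 - Polynomial.X) ^ n * trunc N g - 1 := by
    refine Polynomial.X_pow_dvd_iff.mpr fun d hd => ?_
    rw [← Polynomial.coeff_coe]
    push_cast
    rw [map_sub, ← coeff_coe_trunc_of_lt hd, trunc_mul_trunc, coeff_coe_trunc_of_lt hd, hg,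
      sub_self]
  convert map_dvd (Polynomial.evalRingHom x) hdvd using 1
  · simp
  · have htrunc : (trunc N g).eval x = ∑ j ∈ range N, coeff j g * x ^ j :=
      eval₂_trunc_eq_sum_range x (RingHom.id R) N g
    simp [htrunc, hcoeff]

/-- With `v = (x - 1)⁻¹`: the truncation of `(x - 1)^(-n) = (-1)^n ∑_j binom(n+j-1, j) x^j`. -/
theorem pow_dvd_sum_neg_one_pow_mul_choose_add_pow {n : ℕ} (hn : 0 < n) (N : ℕ) {x v : R}
    (hv : v * (x - 1) = 1) :
    x ^ N ∣ ∑ j ∈ range N, (((-1) ^ (n - 1) * (n + j - 1).choose j : ℤ) : R) * x ^ j + v ^ n := by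
  obtain ⟨r, hr⟩ := pow_dvd_one_sub_pow_mul_sum_choose_sub_one hn N x
  set A := ∑ j ∈ range N, ((n + j - 1).choose j : R) * x ^ j
  have hsum : ∑ j ∈ range N, (((-1) ^ (n - 1) * (n + j - 1).choose j : ℤ) : R) * x ^ j
      = -(-1) ^ n * A := by
    rw [show (-1 : R) ^ n = (-1) ^ (n - 1 + 1) by rw [Nat.sub_add_cancel hn], mul_sum]
    refine sum_congr rfl fun j _ => ?_
    push_cast
    ring
  have hsign : (1 - x) ^ n = (-1) ^ n * (x - 1) ^ n := by rw [← mul_pow, neg_one_mul, neg_sub]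
  have hvn : v ^ n * (x - 1) ^ n = 1 := by rw [← mul_pow, hv, one_pow]
  refine ⟨-v ^ n * r, ?_⟩
  rw [hsum]
  linear_combination (-v ^ n) * hr + A * v ^ n * hsign + A * (-1) ^ n * hvn

theorem coeff_sum_zsmul_rescale {ι : Type*} (s : Finset ι) (e : ι → ℤ) (c : ι → R) (T : R⟦X⟧)
    (m : ℕ) :
    coeff m (∑ j ∈ s, e j • rescale (c j) T) = (∑ j ∈ s, (e j : R) * c j ^ m) * coeff m T := by
  rw [map_sum, sum_mul]
  refine sum_congr rfl fun j _ => ?_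
  rw [map_zsmul, coeff_rescale, zsmul_eq_mul, mul_assoc]

theorem hasLogDeriv_prod_map_rescale_zpow {ι : Type*} {T : R⟦X⟧} {u : R⟦X⟧ˣ}
    (h : HasLogDeriv T u) (s : Finset ι) (c : ι → R) (e : ι → ℤ) :
    HasLogDeriv (∑ j ∈ s, e j • rescale (c j) T)
      ↑(∏ j ∈ s, Units.map (rescale (c j)).toMonoidHom u ^ e j) := by
  rw [Units.coe_prod]
  exact HasLogDeriv.prod fun j _ => (h.rescale (c j)).zpow (w := Units.map _ u) (e j)

theorem constantCoeff_prod_map_rescale_zpow {ι : Type*} {u : R⟦X⟧ˣ}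
    (hu : constantCoeff (u : R⟦X⟧) = 1) (s : Finset ι) (c : ι → R) (e : ι → ℤ) :
    constantCoeff (↑(∏ j ∈ s, Units.map (rescale (c j)).toMonoidHom u ^ e j) : R⟦X⟧) = 1 := by
  have hker (w : R⟦X⟧ˣ) :
      constantCoeff (w : R⟦X⟧) = 1 ↔ Units.map (constantCoeff (R := R)).toMonoidHom w = 1 := by
    simp [Units.ext_iff]
  rw [hker, map_prod]
  refine prod_eq_one fun j _ => ?_
  rw [map_zpow, (hker _).mp, one_zpow]
  change constantCoeff (rescale (c j) (u : R⟦X⟧)) = 1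
  rw [← coeff_zero_eq_constantCoeff_apply, coeff_rescale, pow_zero, one_mul,
    coeff_zero_eq_constantCoeff_apply, hu]

theorem coeff_sum_zsmul_rescale_sub_mem_pow {I : Ideal R} {q : R} (hq : q ∈ I) {n : ℕ}
    (hn : 0 < n) {S v : ℕ → R} (hv : ∀ k : ℕ, 1 ≤ k → v k * (q ^ k - 1) = 1) (N k : ℕ) :
    coeff k (∑ j ∈ range N, ((-1 : ℤ) ^ (n - 1) * ((n + j - 1).choose j : ℤ)) •
        rescale (q ^ j) (mk fun m => if m = 0 then 0 else S m)) -
      coeff k (mk fun m => if m = 0 then 0 else -v m ^ n * S m) ∈ I ^ N := by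
  rw [coeff_sum_zsmul_rescale]
  rcases k with _ | k
  · simp
  have hx : q ^ (k + 1) ∈ I := I.pow_mem_of_mem hq _ k.succ_pos
  have hdvd := pow_dvd_sum_neg_one_pow_mul_choose_add_pow hn N (hv _ k.succ_pos)
  convert (I ^ N).mem_of_dvd (dvd_mul_of_dvd_left hdvd (S (k + 1))) (Ideal.pow_mem_pow hx N)
    using 1
  rw [coeff_mk, coeff_mk, if_neg k.succ_ne_zero, if_neg k.succ_ne_zero]
  simp_rw [← pow_mul, mul_comm _ (k + 1)]
  ring

end PowerSeries

theorem C_eq_prod_L_general {R : Type*} [CommRing R] [Algebra ℚ R]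
    (I : Ideal R)
    (q : R) (hq : q ∈ I) (n : ℕ) (hn : 1 ≤ n) (S : ℕ → R) (v : ℕ → R)
    (hv : ∀ k : ℕ, 1 ≤ k → v k * (q ^ k - 1) = 1)
    (L C : PowerSeries R)
    (hL0 : constantCoeff L = 1) (hC0 : constantCoeff C = 1)
    (hL : ∀ k : ℕ, 1 ≤ k →
      (k : R) * coeff k L = ∑ m ∈ Icc 1 k, S m * coeff (k - m) L)
    (hC : ∀ k : ℕ, 1 ≤ k →
      (k : R) * coeff k C = ∑ m ∈ Icc 1 k, (-(v m) ^ n * S m) * coeff (k - m) C)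
    (uL : (PowerSeries R)ˣ) (huL : (uL : PowerSeries R) = L) :
    ∀ d : ℕ, ∀ m : ℕ, ∃ N₀ : ℕ, ∀ N ≥ N₀,
      coeff d
        ((↑(∏ j ∈ range N,
            (Units.map (rescale (q ^ j)).toMonoidHom uL) ^
              ((-1 : ℤ) ^ (n - 1) * ((n + j - 1).choose j : ℤ))) : PowerSeries R)
          - C) ∈ I ^ m := by
  subst huL
  intro d m
  refine ⟨m, fun N hN => Ideal.pow_le_pow_right hN ?_⟩
  refine coeff_sub_mem_of_hasLogDeriv
    (hasLogDeriv_prod_map_rescale_zpow (HasLogDeriv.mk_of_recurrence hL) _ _ _)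
    (HasLogDeriv.mk_of_recurrence hC) ?_ ?_ (coeff_sum_zsmul_rescale_sub_mem_pow hq hn hv N) d
  · rw [← coeff_zero_eq_constantCoeff_apply, coeff_sum_zsmul_rescale]
    simp
  · rw [constantCoeff_prod_map_rescale_zpow hL0, hC0]

/-- Let `R` be a commutative ℚ-algebra, complete with respect to an ideal `I`,
`q ∈ I`, `n ≥ 1`, `S : ℕ → R` with each `q^k - 1` invertible.  With
`L = exp(∑_{k≥1} S k s^k/k)` and `C = exp(∑_{k≥1} -(q^k-1)^{-n} S k s^k/k)`
(encoded by the coefficient recurrences from logarithmic differentiation),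
the infinite product `∏_{j≥0} L(q^j s)^{(-1)^{n-1} binom(n+j-1,j)}` converges
coefficientwise `I`-adically to `C`. -/
theorem C_eq_prod_L {R : Type*} [CommRing R] [Algebra ℚ R]
    (I : Ideal R) [IsAdicComplete I R]
    (q : R) (hq : q ∈ I) (n : ℕ) (hn : 1 ≤ n) (S : ℕ → R) (v : ℕ → R)
    (hv : ∀ k : ℕ, 1 ≤ k → v k * (q ^ k - 1) = 1)
    (L C : PowerSeries R)
    (hL0 : constantCoeff L = 1) (hC0 : constantCoeff C = 1)
    (hL : ∀ k : ℕ, 1 ≤ k →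
      (k : R) * coeff k L = ∑ m ∈ Icc 1 k, S m * coeff (k - m) L)
    (hC : ∀ k : ℕ, 1 ≤ k →
      (k : R) * coeff k C = ∑ m ∈ Icc 1 k, (-(v m) ^ n * S m) * coeff (k - m) C)
    (uL : (PowerSeries R)ˣ) (huL : (uL : PowerSeries R) = L) :
    ∀ d : ℕ, ∀ m : ℕ, ∃ N₀ : ℕ, ∀ N ≥ N₀,
      coeff d
        ((↑(∏ j ∈ range N,
            (Units.map (rescale (q ^ j)).toMonoidHom uL) ^
              ((-1 : ℤ) ^ (n - 1) * ((n + j - 1).choose j : ℤ))) : PowerSeries R)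
          - C) ∈ I ^ m :=
  C_eq_prod_L_general I q hq n hn S v hv L C hL0 hC0 hL hC uL huL
end

section
/- The Artin–Hasse exponential series E(t) = exp(∑_{i≥0} t^{p^i}/p^i) has all of its coefficients in ℤ_p; that is, E(t) ∈ 1 + t ℤ_p[[t]]. -/
/-!
Let `F = ∑ λₙ Xⁿ` and `S = ∑ᵢ X ^ pⁱ`; the recurrence says `X F' = F S`. Then `F ^ p` and
`F(X ^ p) exp(pX)` both have logarithmic derivative `X G' / G = p S` (using `S(X ^ p) = S - X`)
and constant term `1`, so they are equal.

Since `exp(pX) ≡ 1` and `G ^ p ≡ G(X ^ p)` modulo `p` for integral `G`, comparing coefficients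
of `Xⁿ` with `G` the truncation of `F` below degree `n` (integral by induction) gives
`[Xⁿ] G ^ p + p λₙ ≡ [Xⁿ] G ^ p` modulo `p`, i.e. `λₙ ∈ ℤ_p`.
-/

open Finset PowerSeries

namespace PowerSeries

section LogDerivative

variable {R : Type*} [CommRing R]

theorem coeff_X_mul_derivative (f : R⟦X⟧) (n : ℕ) :
    coeff n (X * d⁄dX R f) = n * coeff n f := by
  cases n with
  | zero => simp
  | succ n => rw [coeff_succ_X_mul, coeff_derivative, mul_comm]; push_cast; rfl

theorem eq_of_X_mul_derivative_eq_mul [IsAddTorsionFree R] {f g T : R⟦X⟧}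
    (hT : constantCoeff T = 0) (hf : X * d⁄dX R f = f * T) (hg : X * d⁄dX R g = g * T)
    (h0 : constantCoeff f = constantCoeff g) : f = g := by
  rw [← sub_eq_zero]
  set D := f - g
  have hD : X * d⁄dX R D = D * T := by simp only [D, map_sub, mul_sub, sub_mul, hf, hg]
  ext n
  induction n using Nat.strong_induction_on with
  | _ n ih =>
  rcases n.eq_zero_or_pos with rfl | hn
  · simp [D, h0]
  have hDT : coeff n (D * T) = 0 := by
    rw [coeff_mul]
    refine sum_eq_zero fun ⟨a, b⟩ hab => ?_
    rcases b.eq_zero_or_pos with rfl | hb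
    · simp [hT]
    · rw [ih a (by simp at hab; omega), map_zero, zero_mul]
  have : (n : R) * coeff n D = 0 := by rw [← coeff_X_mul_derivative, hD, hDT]
  simpa [← nsmul_eq_mul, hn.ne'] using this

theorem X_mul_derivative_expand (p : ℕ) (hp : p ≠ 0) (f : R⟦X⟧) :
    X * d⁄dX R (expand p hp f) = (p : R⟦X⟧) * expand p hp (X * d⁄dX R f) := by
  ext n
  rw [coeff_X_mul_derivative, coeff_expand, ← map_natCast (C (R := R)), coeff_C_mul, coeff_expand]
  split_ifs with h
  · obtain ⟨m, rfl⟩ := h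
    rw [Nat.mul_div_cancel_left _ (Nat.pos_of_ne_zero hp), coeff_X_mul_derivative]
    push_cast
    ring
  · simp

end LogDerivative

section ArtinHasse

variable (R : Type*) [CommRing R] (p : ℕ)

/-- `∑ᵢ X ^ pⁱ`, which is `X E' / E` for the Artin–Hasse exponential `E`. -/
noncomputable def artinHasseLogDeriv : R⟦X⟧ :=
  mk (Set.indicator (Set.range (p ^ ·)) 1)

variable {R p}

theorem constantCoeff_artinHasseLogDeriv (hp : p ≠ 0) :
    constantCoeff (artinHasseLogDeriv R p) = 0 := by
  rw [← coeff_zero_eq_constantCoeff_apply, artinHasseLogDeriv, coeff_mk]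
  refine Set.indicator_of_notMem ?_ _
  rintro ⟨i, hi⟩
  exact pow_ne_zero i hp hi

theorem coeff_mul_artinHasseLogDeriv (hp : 1 < p) (f : R⟦X⟧) (n : ℕ) :
    coeff n (f * artinHasseLogDeriv R p) =
      ∑ i ∈ range (n + 1), if p ^ i ≤ n then coeff (n - p ^ i) f else 0 := by
  classical
  have hinj : Set.InjOn (p ^ ·) ((range (n + 1)).filter (p ^ · ≤ n)) :=
    (Nat.pow_right_injective hp).injOn
  calc coeff n (f * artinHasseLogDeriv R p)
      = ∑ k ∈ range (n + 1), Set.indicator (Set.range (p ^ ·)) 1 k * coeff (n - k) f := by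
        rw [mul_comm, coeff_mul, Nat.sum_antidiagonal_eq_sum_range_succ_mk]
        simp only [artinHasseLogDeriv, coeff_mk]
    _ = ∑ k ∈ (range (n + 1)).filter (· ∈ Set.range (p ^ ·)), coeff (n - k) f := by
        rw [sum_filter]
        simp only [Set.indicator_apply, Pi.one_apply, ite_mul, one_mul, zero_mul]
    _ = ∑ k ∈ ((range (n + 1)).filter (p ^ · ≤ n)).image (p ^ ·), coeff (n - k) f := by
        congr 1
        ext k
        simp only [mem_filter, mem_range, Set.mem_range, mem_image]
        constructor
        · rintro ⟨hk, i, rfl⟩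
          exact ⟨i, ⟨(Nat.lt_pow_self hp).trans hk, by omega⟩, rfl⟩
        · rintro ⟨i, ⟨-, hi⟩, rfl⟩
          exact ⟨by omega, i, rfl⟩
    _ = _ := by rw [sum_image hinj, sum_filter]

theorem expand_artinHasseLogDeriv (hp : 1 < p) :
    expand p (by omega) (artinHasseLogDeriv R p) = artinHasseLogDeriv R p - X := by
  ext n
  simp only [coeff_expand, map_sub, coeff_X, artinHasseLogDeriv, coeff_mk]
  by_cases h1 : n = 1
  · subst h1
    have hone : 1 ∈ Set.range (p ^ ·) := ⟨0, pow_zero p⟩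
    rw [if_neg (mt Nat.dvd_one.mp (by omega)), if_pos rfl, Set.indicator_of_mem hone, Pi.one_apply,
      sub_self]
  rw [if_neg h1, sub_zero]
  split_ifs with hd
  · obtain ⟨m, rfl⟩ := hd
    have hmem : m ∈ Set.range (p ^ ·) ↔ p * m ∈ Set.range (p ^ ·) := by
      constructor
      · rintro ⟨i, rfl⟩
        exact ⟨i + 1, pow_succ' p i⟩
      · rintro ⟨j, hj⟩
        obtain _ | j := j
        · exact absurd (by simpa using hj.symm) h1
        · exact ⟨j, Nat.eq_of_mul_eq_mul_left (by omega) ((pow_succ' p j).symm.trans hj)⟩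
    rw [Nat.mul_div_cancel_left m (by omega)]
    by_cases hm : m ∈ Set.range (p ^ ·)
    · rw [Set.indicator_of_mem hm, Set.indicator_of_mem (hmem.mp hm), Pi.one_apply, Pi.one_apply]
    · rw [Set.indicator_of_notMem hm, Set.indicator_of_notMem (mt hmem.mpr hm)]
  · refine (Set.indicator_of_notMem ?_ _).symm
    rintro ⟨_ | j, hj⟩
    · exact h1 hj.symm
    · exact hd ⟨p ^ j, hj ▸ pow_succ' p j⟩

theorem X_mul_derivative_mk_eq_mul_artinHasseLogDeriv (hp : 1 < p) {lam : ℕ → R}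
    (hrec : ∀ n : ℕ, 1 ≤ n →
      (n : R) * lam n = ∑ i ∈ range (n + 1), if p ^ i ≤ n then lam (n - p ^ i) else 0) :
    X * d⁄dX R (mk lam) = mk lam * artinHasseLogDeriv R p := by
  ext n
  simp only [coeff_X_mul_derivative, coeff_mul_artinHasseLogDeriv hp, coeff_mk]
  rcases n.eq_zero_or_pos with rfl | hn
  · simp
  · exact hrec n hn

theorem pow_eq_expand_mul_exp_pow [Algebra ℚ R] (hp : 1 < p) {F : R⟦X⟧}
    (hF0 : constantCoeff F = 1) (hF : X * d⁄dX R F = F * artinHasseLogDeriv R p) :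
    F ^ p = expand p (by omega) F * exp R ^ p := by
  have : IsAddTorsionFree R := .of_module_rat R
  have hp0 : p ≠ 0 := by omega
  set S := artinHasseLogDeriv R p
  refine eq_of_X_mul_derivative_eq_mul (T := (p : R⟦X⟧) * S) ?_ ?_ ?_ ?_
  · simp [S, constantCoeff_artinHasseLogDeriv hp0]
  · rw [derivative_pow]
    linear_combination
      (p : R⟦X⟧) * F ^ (p - 1) * hF + (p : R⟦X⟧) * S * pow_sub_one_mul hp0 F
  · have hexp : X * d⁄dX R (exp R ^ p) = exp R ^ p * ((p : R⟦X⟧) * X) := by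
      rw [derivative_pow, derivative_exp]
      linear_combination (p : R⟦X⟧) * X * pow_sub_one_mul hp0 (exp R)
    have hexpand :
        X * d⁄dX R (expand p hp0 F) = expand p hp0 F * ((p : R⟦X⟧) * (S - X)) := by
      rw [X_mul_derivative_expand, hF, map_mul, expand_artinHasseLogDeriv hp]
      ring
    rw [Derivation.leibniz, smul_eq_mul, smul_eq_mul]
    linear_combination expand p hp0 F * hexp + exp R ^ p * hexpand
  · simp [hF0]

end ArtinHasse

section Truncation

variable {R : Type*} [CommRing R]

theorem coeff_pow_eq_coeff_trunc_pow_add {F : R⟦X⟧} (hF0 : constantCoeff F = 1) {n : ℕ}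
    (hn : 0 < n) (k : ℕ) :
    coeff n (F ^ k) = coeff n ((trunc n F : R⟦X⟧) ^ k) + k * coeff n F := by
  set g : R⟦X⟧ := (trunc n F : R⟦X⟧)
  obtain ⟨H, hH⟩ : X ^ n ∣ F - g :=
    X_pow_dvd_iff.mpr fun d hd => by simp [g, coeff_coe_trunc_of_lt hd]
  have hH0 : constantCoeff H = coeff n F := by
    simpa [g, coeff_trunc, coeff_X_pow_mul'] using (congrArg (coeff n) hH).symm
  have hg0 : constantCoeff g = 1 := by
    rw [← coeff_zero_eq_constantCoeff_apply, coeff_coe_trunc_of_lt hn,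
      coeff_zero_eq_constantCoeff_apply, hF0]
  rw [← sub_eq_iff_eq_add', ← map_sub, ← geom_sum₂_mul, hH, mul_left_comm, coeff_X_pow_mul',
    if_pos le_rfl, Nat.sub_self, coeff_zero_eq_constantCoeff_apply]
  simp [hH0, hF0, hg0, mul_comm]

theorem coeff_expand_mul_eq_coeff_expand_trunc_mul {p : ℕ} (hp : 1 < p) (F E : R⟦X⟧) {n : ℕ}
    (hn : 0 < n) :
    coeff n (expand p (by omega) F * E) =
      coeff n (expand p (by omega) (trunc n F : R⟦X⟧) * E) := by
  rw [coeff_mul, coeff_mul]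
  refine sum_congr rfl fun ⟨a, b⟩ hab => ?_
  rw [coeff_expand, coeff_expand]
  split_ifs
  · rw [coeff_coe_trunc_of_lt]
    have ha : a ≤ n := Finset.HasAntidiagonal.antidiagonal.fst_le hab
    exact (Nat.div_le_div_right ha).trans_lt (Nat.div_lt_self hn hp)
  · rfl

end Truncation

theorem norm_coeff_mul_le {R : Type*} [NormedRing R] [IsUltrametricDist R] {f g : R⟦X⟧}
    {a b : ℝ} (hf : ∀ i, ‖coeff i f‖ ≤ a) (hg : ∀ i, ‖coeff i g‖ ≤ b) (n : ℕ) :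
    ‖coeff n (f * g)‖ ≤ a * b := by
  have ha : 0 ≤ a := (norm_nonneg _).trans (hf 0)
  have hb : 0 ≤ b := (norm_nonneg _).trans (hg 0)
  rw [coeff_mul]
  refine IsUltrametricDist.norm_sum_le_of_forall_le_of_nonneg (mul_nonneg ha hb) fun x _ => ?_
  exact (norm_mul_le _ _).trans (mul_le_mul (hf _) (hg _) (norm_nonneg _) ha)

section Padic

variable {p : ℕ} [hp : Fact p.Prime]

theorem expand_card_zmod (φ : (ZMod p)⟦X⟧) : expand p hp.out.ne_zero φ = φ ^ p := by
  have := MvPowerSeries.map_frobenius_expand p hp.out.ne_zero (f := φ)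
  rwa [ZMod.frobenius_zmod, MvPowerSeries.map_id, RingHom.id_apply] at this

theorem norm_coeff_pow_sub_coeff_expand_le {f : ℚ_[p]⟦X⟧} (hf : ∀ i, ‖coeff i f‖ ≤ 1)
    (n : ℕ) :
    ‖coeff n (f ^ p) - coeff n (expand p hp.out.ne_zero f)‖ ≤ (p : ℝ)⁻¹ := by
  obtain ⟨f, rfl⟩ : ∃ f' : ℤ_[p]⟦X⟧, map PadicInt.Coe.ringHom f' = f :=
    ⟨mk fun i => ⟨coeff i f, hf i⟩, by
      ext i; exact (coeff_map _ _ _).trans (congrArg _ (coeff_mk i _))⟩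
  have hx : coeff n (f ^ p) - coeff n (expand p hp.out.ne_zero f) ∈
      IsLocalRing.maximalIdeal ℤ_[p] := by
    rw [← PadicInt.ker_toZMod, RingHom.mem_ker, ← map_sub, ← coeff_map, map_sub, map_pow,
      map_expand, expand_card_zmod, sub_self, map_zero]
  rw [← map_pow, ← map_expand, coeff_map, coeff_map, ← map_sub, ← zpow_neg_one]
  refine (PadicInt.norm_le_pow_iff_norm_lt_pow_add_one _ (-1)).mpr ?_
  simpa using PadicInt.mem_nonunits.mp hx

theorem norm_coeff_exp_pow_sub_one_le (b : ℕ) :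
    ‖coeff b (exp ℚ_[p] ^ p - 1)‖ ≤ (p : ℝ)⁻¹ := by
  rw [exp_pow_eq_rescale_exp, map_sub, coeff_rescale, coeff_exp, coeff_one]
  rcases eq_or_ne b 0 with rfl | hb
  · simp
  have hv := padicValNat_factorial_lt_of_ne_zero p hb
  have hfac : (b.factorial : ℚ_[p]) ≠ 0 := by exact_mod_cast b.factorial_ne_zero
  rw [if_neg hb, sub_zero, map_div₀, map_one, map_natCast, norm_mul, Padic.norm_p_pow, norm_div,
    norm_one, Padic.norm_eq_zpow_neg_valuation hfac, Padic.valuation_natCast, one_div,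
    ← zpow_neg, ← zpow_add₀ (by exact_mod_cast hp.out.ne_zero), ← zpow_neg_one]
  exact zpow_le_zpow_right₀ (by exact_mod_cast hp.out.one_lt.le) (by omega)

theorem norm_coeff_le_one_of_pow_eq_expand_mul {F E : ℚ_[p]⟦X⟧} (hF0 : constantCoeff F = 1)
    (hE : ∀ b, ‖coeff b (E - 1)‖ ≤ (p : ℝ)⁻¹) (h : F ^ p = expand p hp.out.ne_zero F * E)
    (n : ℕ) : ‖coeff n F‖ ≤ 1 := by
  induction n using Nat.strong_induction_on with
  | _ n ih =>
  rcases n.eq_zero_or_pos with rfl | hn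
  · simp [hF0]
  set G : ℚ_[p]⟦X⟧ := (trunc n F : ℚ_[p]⟦X⟧)
  have hG : ∀ i, ‖coeff i G‖ ≤ 1 := fun i => by
    rw [Polynomial.coeff_coe, coeff_trunc]
    split_ifs with hi
    exacts [ih i hi, by simp]
  have hexpandG : ∀ i, ‖coeff i (expand p hp.out.ne_zero G)‖ ≤ 1 := fun i => by
    rw [coeff_expand]
    split_ifs
    exacts [hG _, by simp]
  have hE' :
      ‖coeff n (expand p hp.out.ne_zero G * E) - coeff n (expand p hp.out.ne_zero G)‖ ≤
        (p : ℝ)⁻¹ := by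
    simpa [mul_sub] using norm_coeff_mul_le hexpandG hE n
  have hfrob : ‖coeff n (expand p hp.out.ne_zero G) - coeff n (G ^ p)‖ ≤ (p : ℝ)⁻¹ := by
    rw [norm_sub_rev]
    exact norm_coeff_pow_sub_coeff_expand_le hG n
  have hpc : (p : ℚ_[p]) * coeff n F =
      (coeff n (expand p hp.out.ne_zero G * E) - coeff n (expand p hp.out.ne_zero G)) +
        (coeff n (expand p hp.out.ne_zero G) - coeff n (G ^ p)) := by
    rw [← coeff_expand_mul_eq_coeff_expand_trunc_mul hp.out.one_lt F E hn, ← h,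
      coeff_pow_eq_coeff_trunc_pow_add hF0 hn]
    ring
  have hnorm : ‖(p : ℚ_[p]) * coeff n F‖ ≤ (p : ℝ)⁻¹ :=
    hpc ▸ (IsUltrametricDist.norm_add_le_max _ _).trans (max_le hE' hfrob)
  rw [norm_mul, Padic.norm_p] at hnorm
  exact le_of_mul_le_mul_left (by simpa using hnorm) (inv_pos.mpr (Nat.cast_pos.mpr hp.out.pos))

end Padic

end PowerSeries

/-- The Artin–Hasse exponential `E(t) = exp(∑_{i≥0} t^{p^i}/p^i) = ∑ λ_n t^n`
over `ℚ_p`, encoded by `λ 0 = 1` together with the recurrence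
`n·λ_n = ∑_{i : p^i ≤ n} λ_{n - p^i}` obtained by logarithmic differentiation,
has all its coefficients in `ℤ_p`: `E(t) ∈ 1 + t ℤ_p[[t]]`. -/
theorem artin_hasse_coeff_integral (p : ℕ) [Fact p.Prime] (lam : ℕ → ℚ_[p])
    (h0 : lam 0 = 1)
    (hrec : ∀ n : ℕ, 1 ≤ n →
      (n : ℚ_[p]) * lam n =
        ∑ i ∈ range (n + 1), if p ^ i ≤ n then lam (n - p ^ i) else 0) :
    ∀ n : ℕ, ‖lam n‖ ≤ 1 := by
  have hp : 1 < p := (Fact.out : p.Prime).one_lt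
  have hF0 : constantCoeff (mk lam) = 1 := by
    rw [← coeff_zero_eq_constantCoeff_apply, coeff_mk, h0]
  have hdwork : mk lam ^ p = expand p _ (mk lam) * exp ℚ_[p] ^ p :=
    pow_eq_expand_mul_exp_pow hp hF0 (X_mul_derivative_mk_eq_mul_artinHasseLogDeriv hp hrec)
  intro n
  simpa using norm_coeff_le_one_of_pow_eq_expand_mul hF0 norm_coeff_exp_pow_sub_one_le hdwork n
end
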